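/- arXiv:2009.04955 — 7 statements merged into one kernel-verified Lean document; each statement's English description precedes it below -/
import Mathlib

section
/- For any prime p > 2 and positive integers a, b, r: if d is a positive divisor of r such that d + p^b·r/d ≡ 0 (mod 2p^a) (where p^b·r/d means p^b r divided by d, d dividing p^b r with d | r), then p^{min(a,b)} divides d. -/
/-- For an odd prime `p`, positive integers `a, b, r`, and a positive divisor `d` of `r`
with `d + p^b·(r/d) ≡ 0 (mod 2p^a)`, we have `p^{min(a,b)} ∣ d`. -/
theorem small_divisor_padic (p a b r d : ℕ) (hp : p.Prime) (hodd : p ≠ 2)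
    (ha : 0 < a) (hb : 0 < b) (hr : 0 < r) (hd : 0 < d) (hdr : d ∣ r)
    (hcong : 2 * p ^ a ∣ d + p ^ b * (r / d)) :
    p ^ min a b ∣ d := by
  have h1 : p ^ min a b ∣ d + p ^ b * (r / d) :=
    (pow_dvd_pow p (min_le_left a b)).trans ((dvd_mul_left _ _).trans hcong)
  have h2 : p ^ min a b ∣ p ^ b * (r / d) :=
    (pow_dvd_pow p (min_le_right a b)).mul_right _
  exact (Nat.dvd_add_right h2).mp (by rwa [Nat.add_comm] at h1)
end

section
/- For real parameters with Re(b) > 0, Re(a+b) > 0, c > 0, s > 0: ∫_0^∞ Γ(a, c z) z^{b-1} e^{-s z} dz = (c^a Γ(a+b))/(b (c+s)^{a+b}) · ₂F₁(1, a+b, b+1; s/(s+c)), where Γ(a,x) = ∫_x^∞ t^{a-1} e^{-t} dt is the upper incomplete Gamma function. -/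
/-!
Substituting `t = c z / w` with `w ∈ (0, 1)` in `Γ(a, c z)` and then integrating in `z` first
(Tonelli) gives `c^a Γ(a+b) ∫₀¹ w^{b-1} (c + s w)^{-(a+b)} dw`. Writing
`c + s w = (c + s) (1 - x (1 - w))` with `x = s / (s + c)`, the binomial series
`(1 - y)^{-(a+b)} = ∑ (a+b)ₙ yⁿ / n!` and the Beta integral
`∫₀¹ w^{b-1} (1 - w)ⁿ dw = n! / (b)ₙ₊₁` turn this into the `₂F₁` series; the termwise
integration is monotone convergence, all terms being nonnegative.
-/

open Real

/-- The upper incomplete Gamma function `Γ(s,x) = ∫_x^∞ t^{s-1} e^{-t} dt`. -/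
noncomputable def uGamma (s x : ℝ) : ℝ := ∫ t in Set.Ioi x, t ^ (s - 1) * Real.exp (-t)

/-- The Gauss hypergeometric function `₂F₁(a,b,c;x) = ∑_{n≥0} (a)_n (b)_n / ((c)_n n!) xⁿ`. -/
noncomputable def hyp2F1 (a b c x : ℝ) : ℝ :=
  ∑' n : ℕ, ((ascPochhammer ℝ n).eval a * (ascPochhammer ℝ n).eval b /
    ((ascPochhammer ℝ n).eval c * (n.factorial : ℝ))) * x ^ n

open MeasureTheory Set
open scoped Nat

section Pochhammer

variable {S : Type*} [CommSemiring S]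

theorem ascPochhammer_succ_eval_left (n : ℕ) (x : S) :
    (ascPochhammer S (n + 1)).eval x = x * (ascPochhammer S n).eval (x + 1) := by
  simp [ascPochhammer_succ_left]

theorem ascPochhammer_eval_eq_prod_range (n : ℕ) (x : S) :
    (ascPochhammer S n).eval x = ∏ j ∈ Finset.range n, (x + j) := by
  induction n with
  | zero => simp
  | succ n ih => rw [ascPochhammer_succ_eval, ih, Finset.prod_range_succ]

end Pochhammer

theorem hasSum_ascPochhammer_mul_pow_div_factorial (G : ℝ) {x : ℝ} (hx : |x| < 1) :
    HasSum (fun n : ℕ => (ascPochhammer ℝ n).eval G * x ^ n / n !) (1 / (1 - x) ^ G) := by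
  have h := (one_div_one_sub_rpow_hasFPowerSeriesOnBall_zero G).hasSum
    (y := x) (by simpa [enorm_eq_nnnorm, ← NNReal.coe_lt_one] using hx)
  simp only [FormalMultilinearSeries.ofScalars_apply_eq, zero_add, smul_eq_mul] at h
  refine h.congr_fun fun n => ?_
  have := Ring.factorial_nsmul_multichoose_eq_ascPochhammer G n
  rw [nsmul_eq_mul, Polynomial.ascPochhammer_smeval_eq_eval, Ring.multichoose_eq] at this
  rw [← this]
  field_simp

theorem integral_rpow_mul_one_sub_pow {b : ℝ} (hb : 0 < b) (n : ℕ) :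
    ∫ w in Ioo (0 : ℝ) 1, w ^ (b - 1) * (1 - w) ^ n = n ! / (ascPochhammer ℝ (n + 1)).eval b := by
  have h := Complex.betaIntegral_eval_nat_add_one_right (u := b) (by simpa using hb) n
  rw [Complex.betaIntegral, intervalIntegral.integral_of_le zero_le_one,
    integral_Ioc_eq_integral_Ioo] at h
  apply Complex.ofReal_injective
  rw [← integral_complex_ofReal, ascPochhammer_eval_eq_prod_range]
  push_cast
  rw [← h]
  refine setIntegral_congr_fun measurableSet_Ioo fun w hw => ?_
  simp [Complex.ofReal_cpow hw.1.le]

theorem hasSum_integral_of_nonneg {α ι : Type*} [MeasurableSpace α] [Countable ι] {μ : Measure α}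
    {F : ι → α → ℝ} {f : α → ℝ} (hF_meas : ∀ n, AEStronglyMeasurable (F n) μ)
    (hF_nonneg : ∀ n, ∀ᵐ x ∂μ, 0 ≤ F n x) (hf : Integrable f μ)
    (h_lim : ∀ᵐ x ∂μ, HasSum (fun n => F n x) (f x)) :
    HasSum (fun n => ∫ x, F n x ∂μ) (∫ x, f x ∂μ) :=
  hasSum_integral_of_dominated_convergence F hF_meas
    (fun n => (hF_nonneg n).mono fun _ hx => (Real.norm_of_nonneg hx).le)
    (h_lim.mono fun _ hx => hx.summable)
    (hf.congr (h_lim.mono fun _ hx => hx.tsum_eq.symm)) h_lim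

theorem integral_integral_swap_of_nonneg {α β : Type*} [MeasurableSpace α] [MeasurableSpace β]
    {μ : Measure α} {ν : Measure β} [SFinite μ] [SFinite ν] {f : α → β → ℝ}
    (hf_meas : AEStronglyMeasurable (Function.uncurry f) (μ.prod ν))
    (hf_nonneg : ∀ᵐ y ∂ν, ∀ᵐ x ∂μ, 0 ≤ f x y) (hf_sec : ∀ᵐ y ∂ν, Integrable (f · y) μ)
    (hf_int : Integrable (fun y => ∫ x, f x y ∂μ) ν) :
    ∫ x, ∫ y, f x y ∂ν ∂μ = ∫ y, ∫ x, f x y ∂μ ∂ν := by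
  refine integral_integral_swap ((integrable_prod_iff' hf_meas).2 ⟨hf_sec, hf_int.congr ?_⟩)
  filter_upwards [hf_nonneg] with y hy
  exact integral_congr_ae (hy.mono fun x hx => (Real.norm_of_nonneg hx).symm)

theorem setIntegral_Ioi_eq_setIntegral_Ioo_div {E : Type*} [NormedAddCommGroup E]
    [NormedSpace ℝ E] {k : ℝ} (hk : 0 < k) (g : ℝ → E) :
    ∫ t in Ioi k, g t = ∫ w in Ioo 0 1, (k / w ^ 2) • g (k / w) := by
  have himage : (k / ·) '' Ioo 0 1 = Ioi k := by
    ext t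
    constructor
    · rintro ⟨w, ⟨hw0, hw1⟩, rfl⟩
      exact (lt_div_iff₀ hw0).2 (mul_lt_of_lt_one_right hk hw1)
    · intro ht
      have ht0 : 0 < t := hk.trans ht
      exact ⟨k / t, ⟨by positivity, (div_lt_one ht0).2 ht⟩, div_div_cancel₀ hk.ne'⟩
  have hderiv : ∀ w ∈ Ioo (0 : ℝ) 1, HasDerivWithinAt (k / ·) (-(k / w ^ 2)) (Ioo 0 1) w := by
    intro w hw
    simpa [div_eq_mul_inv] using ((hasDerivAt_inv hw.1.ne').const_mul k).hasDerivWithinAt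
  have hinj : InjOn (k / ·) (Ioo (0 : ℝ) 1) := fun w₁ _ w₂ _ h =>
    inv_injective (mul_left_cancel₀ hk.ne' (by simpa [div_eq_mul_inv] using h))
  rw [← himage, integral_image_eq_integral_abs_deriv_smul measurableSet_Ioo hderiv hinj]
  refine setIntegral_congr_fun measurableSet_Ioo fun w hw => ?_
  rw [abs_neg, abs_of_pos (by have := hw.1; positivity)]

theorem uGamma_eq_integral_Ioo (a : ℝ) {k : ℝ} (hk : 0 < k) :
    uGamma a k = k ^ a * ∫ w in Ioo 0 1, w ^ (-a - 1) * exp (-(k / w)) := by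
  rw [uGamma, setIntegral_Ioi_eq_setIntegral_Ioo_div hk, ← integral_const_mul]
  refine setIntegral_congr_fun measurableSet_Ioo fun w hw => ?_
  have hw0 := hw.1
  rw [smul_eq_mul, div_rpow hk.le hw0.le, rpow_sub_one hk.ne', rpow_sub_one hw0.ne',
    show -a - 1 = -(a + 1) by ring, rpow_neg hw0.le, rpow_add_one hw0.ne']
  field_simp

theorem integrableOn_rpow_div_add_mul_rpow {b c s G : ℝ} (hb : 0 < b) (hc : 0 < c)
    (hs : 0 ≤ s) (hG : 0 ≤ G) :
    IntegrableOn (fun w => w ^ (b - 1) / (c + s * w) ^ G) (Ioo 0 1) := by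
  have h_rpow : IntegrableOn (fun w : ℝ => w ^ (b - 1) / c ^ G) (Ioo 0 1) :=
    (((intervalIntegral.intervalIntegrable_rpow' (by linarith)).1).mono_set
      Ioo_subset_Ioc_self).div_const _
  refine h_rpow.mono' (Measurable.aestronglyMeasurable (by fun_prop)) ?_
  filter_upwards [ae_restrict_mem measurableSet_Ioo] with w ⟨hw0, _⟩
  rw [norm_of_nonneg (by positivity)]
  gcongr
  linarith [mul_nonneg hs hw0.le]

theorem integrableOn_rpow_mul_exp_neg_mul {p r : ℝ} (hp : 0 < p) (hr : 0 < r) :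
    IntegrableOn (fun t => t ^ (p - 1) * exp (-(r * t))) (Ioi 0) := by
  simpa [rpow_one, neg_mul] using
    integrableOn_rpow_mul_exp_neg_mul_rpow (s := p - 1) (by linarith) zero_lt_one hr

theorem integral_uGamma_mul_rpow_mul_exp_eq {a b c s : ℝ} (hb : 0 < b) (hab : 0 < a + b)
    (hc : 0 < c) (hs : 0 ≤ s) :
    ∫ z in Ioi 0, uGamma a (c * z) * z ^ (b - 1) * exp (-(s * z))
      = c ^ a * Gamma (a + b) * ∫ w in Ioo 0 1, w ^ (b - 1) / (c + s * w) ^ (a + b) := by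
  set f : ℝ → ℝ → ℝ := fun z w =>
    c ^ a * w ^ (-a - 1) * (z ^ (a + b - 1) * exp (-((s + c / w) * z)))
  have h_outer : ∀ z ∈ Ioi (0 : ℝ),
      uGamma a (c * z) * z ^ (b - 1) * exp (-(s * z)) = ∫ w in Ioo 0 1, f z w := by
    intro z hz
    rw [uGamma_eq_integral_Ioo a (mul_pos hc hz), ← integral_const_mul, ← integral_mul_const,
      ← integral_mul_const]
    refine setIntegral_congr_fun measurableSet_Ioo fun w hw => ?_
    have hw0 : w ≠ 0 := hw.1.ne'
    simp only [f]
    rw [mul_rpow hc.le (le_of_lt hz), show a + b - 1 = a + (b - 1) by ring, rpow_add hz,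
      show -((s + c / w) * z) = -(c * z / w) + -(s * z) by field_simp; ring, exp_add]
    ring
  have h_inner : ∀ w ∈ Ioo (0 : ℝ) 1,
      ∫ z in Ioi 0, f z w = c ^ a * Gamma (a + b) * (w ^ (b - 1) / (c + s * w) ^ (a + b)) := by
    intro w ⟨hw0, _⟩
    have hcsw : 0 < c + s * w := by positivity
    rw [integral_const_mul, integral_rpow_mul_exp_neg_mul_Ioi hab (by positivity),
      show 1 / (s + c / w) = w / (c + s * w) by field_simp; ring, div_rpow hw0.le hcsw.le,
      show b - 1 = -a - 1 + (a + b) by ring, rpow_add hw0 (-a - 1)]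
    ring
  calc ∫ z in Ioi 0, uGamma a (c * z) * z ^ (b - 1) * exp (-(s * z))
      = ∫ z in Ioi 0, ∫ w in Ioo 0 1, f z w := setIntegral_congr_fun measurableSet_Ioi h_outer
    _ = ∫ w in Ioo 0 1, ∫ z in Ioi 0, f z w := by
      refine integral_integral_swap_of_nonneg (by fun_prop) ?_ ?_ ?_
      · filter_upwards [ae_restrict_mem measurableSet_Ioo] with w ⟨hw0, _⟩
        filter_upwards [ae_restrict_mem measurableSet_Ioi] with z hz
        have : (0 : ℝ) < z := hz
        positivity
      · filter_upwards [ae_restrict_mem measurableSet_Ioo] with w ⟨hw0, _⟩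
        exact (integrableOn_rpow_mul_exp_neg_mul hab (by positivity)).const_mul _
      · exact IntegrableOn.congr_fun ((integrableOn_rpow_div_add_mul_rpow hb hc hs hab.le).const_mul
          (c ^ a * Gamma (a + b))) (fun w hw => (h_inner w hw).symm) measurableSet_Ioo
    _ = c ^ a * Gamma (a + b) * ∫ w in Ioo 0 1, w ^ (b - 1) / (c + s * w) ^ (a + b) := by
      rw [setIntegral_congr_fun measurableSet_Ioo h_inner, integral_const_mul]

theorem integral_rpow_div_add_mul_rpow_eq_hyp2F1 {b c s G : ℝ} (hb : 0 < b) (hc : 0 < c)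
    (hs : 0 ≤ s) (hG : 0 < G) :
    ∫ w in Ioo 0 1, w ^ (b - 1) / (c + s * w) ^ G
      = 1 / (b * (c + s) ^ G) * hyp2F1 1 G (b + 1) (s / (s + c)) := by
  set x := s / (s + c) with hx
  have hcs : 0 < c + s := by linarith
  have hx0 : 0 ≤ x := by positivity
  have hx1 : x < 1 := (div_lt_one (by linarith)).2 (by linarith)
  set F : ℕ → ℝ → ℝ := fun n w =>
    (ascPochhammer ℝ n).eval G * x ^ n / (n ! * (c + s) ^ G) * (w ^ (b - 1) * (1 - w) ^ n)
  have h_pt : ∀ w ∈ Ioo (0 : ℝ) 1, HasSum (F · w) (w ^ (b - 1) / (c + s * w) ^ G) := by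
    intro w ⟨hw0, hw1⟩
    have hxw : |x * (1 - w)| < 1 := by
      rw [abs_of_nonneg (mul_nonneg hx0 (by linarith))]
      nlinarith
    have h_split : c + s * w = (c + s) * (1 - x * (1 - w)) := by
      rw [hx]; field_simp; ring
    have h_value : w ^ (b - 1) / (c + s * w) ^ G
        = w ^ (b - 1) * (1 / (1 - x * (1 - w)) ^ G) / (c + s) ^ G := by
      rw [h_split, mul_rpow hcs.le (by linarith [abs_lt.1 hxw])]
      ring
    rw [h_value]
    refine (((hasSum_ascPochhammer_mul_pow_div_factorial G hxw).mul_left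
      (w ^ (b - 1))).div_const ((c + s) ^ G)).congr_fun fun n => ?_
    simp only [F, mul_pow]
    ring
  have h_term : ∀ n, ∫ w in Ioo 0 1, F n w = 1 / (b * (c + s) ^ G) *
      ((ascPochhammer ℝ n).eval 1 * (ascPochhammer ℝ n).eval G /
        ((ascPochhammer ℝ n).eval (b + 1) * n !) * x ^ n) := by
    intro n
    have := ascPochhammer_pos n (b + 1) (by linarith)
    rw [integral_const_mul, integral_rpow_mul_one_sub_pow hb, ascPochhammer_succ_eval_left,
      ascPochhammer_eval_one]
    field_simp
  have h_nonneg : ∀ n, ∀ᵐ w ∂volume.restrict (Ioo (0 : ℝ) 1), 0 ≤ F n w := fun n => by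
    filter_upwards [ae_restrict_mem measurableSet_Ioo] with w ⟨hw0, hw1⟩
    have := ascPochhammer_pos n G hG
    exact mul_nonneg (by positivity)
      (mul_nonneg (rpow_nonneg hw0.le _) (pow_nonneg (by linarith) _))
  have h_sum := hasSum_integral_of_nonneg
    (fun n => Measurable.aestronglyMeasurable (by fun_prop)) h_nonneg
    (integrableOn_rpow_div_add_mul_rpow hb hc hs hG.le)
    (ae_restrict_of_forall_mem measurableSet_Ioo h_pt)
  simp only [h_term] at h_sum
  rw [← h_sum.tsum_eq, tsum_mul_left, hyp2F1]

/-- For `b > 0`, `a + b > 0`, `c > 0`, `s > 0`: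
`∫_0^∞ Γ(a,cz) z^{b-1} e^{-sz} dz = (c^a Γ(a+b))/(b (c+s)^{a+b}) ₂F₁(1, a+b, b+1; s/(s+c))`. -/
theorem incomplete_gamma_laplace_transform (a b c s : ℝ)
    (hb : 0 < b) (hab : 0 < a + b) (hc : 0 < c) (hs : 0 < s) :
    ∫ z in Set.Ioi (0 : ℝ), uGamma a (c * z) * z ^ (b - 1) * Real.exp (-(s * z))
      = c ^ a * Real.Gamma (a + b) / (b * (c + s) ^ (a + b)) *
          hyp2F1 1 (a + b) (b + 1) (s / (s + c)) := by
  rw [integral_uGamma_mul_rpow_mul_exp_eq hb hab hc hs.le,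
    integral_rpow_div_add_mul_rpow_eq_hyp2F1 hb hc hs.le hab]
  ring
end

section
/- For integers κ ≥ 2 and a real parameter k_f with k_f ∉ ℕ, setting b = 2 - k_f and a = κ, the polynomial P_{a,b}(X,Y) = ∑_{j=0}^{a-2} C(j+b-2, j) X^j (X+Y)^{a-2-j} satisfies P_{a,b}(X,Y) = ∑_{j=0}^{a-2} C(a+b-3, a-2-j) C(j+b-2, j) (X+Y)^{a-2-j} (-Y)^j, provided b ≠ 1 and b ≠ 2. -/
/-!
Over any binomial ring the identity holds with `Ring.choose` in place of `genChoose`, for an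
arbitrary shift `c = b - 2`. Expand `X ^ j = (-Y + (X + Y)) ^ j` binomially; the trinomial revision
`C(c+j, j) C(j, i) = C(c+i+l, l) C(c+i, i)` (with `j = i + l`) turns the coefficient of
`(X + Y) ^ (m - i) (-Y) ^ i` into `C(c+i, i) ∑_{l ≤ m-i} C(c+i+l, l)`, and the upper-index
hockey-stick identity sums this to `C(c+i, i) C(c+m+1, m-i)`.
Since `k_f ∉ ℕ`, none of the Gamma values in the denominators sits at a pole (where
`Real.Gamma` takes the junk value `0`), so there `genChoose` agrees with `Ring.choose`.
-/

/-- The generalized binomial coefficient `C(x,k) = Γ(x+1)/(k! Γ(x-k+1))`. -/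
noncomputable def genChoose (x : ℝ) (k : ℕ) : ℝ :=
  Real.Gamma (x + 1) / ((k.factorial : ℝ) * Real.Gamma (x - k + 1))

/-- The polynomial `P_{a,b}(X,Y) = ∑_{j=0}^{a-2} C(j+b-2, j) X^j (X+Y)^{a-2-j}`. -/
noncomputable def Ppoly (a : ℕ) (b : ℝ) (X Y : ℝ) : ℝ :=
  ∑ j ∈ Finset.range (a - 1), genChoose ((j : ℝ) + b - 2) j * X ^ j * (X + Y) ^ (a - 2 - j)

open Finset

namespace Ring

variable {R : Type*} [Ring R] [BinomialRing R]

theorem succ_nsmul_choose_succ (r : R) (k : ℕ) :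
    (k + 1) • choose r (k + 1) = choose r k * (r - k) := by
  simpa [Nat.choose_succ_self_right, choose_one_right] using choose_smul_choose r k.le_succ

theorem sum_range_choose_add_self (r : R) (n : ℕ) :
    ∑ l ∈ range (n + 1), choose (r + l) l = choose (r + n + 1) n := by
  induction n with
  | zero => simp
  | succ n ih =>
    rw [sum_range_succ, ih, Nat.cast_succ, ← add_assoc, ← choose_succ_succ, add_right_comm]

end Ring

theorem sum_choose_mul_pow_mul_add_pow {R : Type*} [CommRing R] [BinomialRing R]
    (c X Y : R) (m : ℕ) :
    ∑ j ∈ range (m + 1), Ring.choose (c + j) j * X ^ j * (X + Y) ^ (m - j)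
      = ∑ i ∈ range (m + 1),
          Ring.choose (c + m + 1) (m - i) * Ring.choose (c + i) i * (X + Y) ^ (m - i) * (-Y) ^ i := by
  calc ∑ j ∈ range (m + 1), Ring.choose (c + j) j * X ^ j * (X + Y) ^ (m - j)
      = ∑ j ∈ range (m + 1), ∑ i ∈ range (j + 1),
          Ring.choose (c + j) j * j.choose i * (X + Y) ^ (m - i) * (-Y) ^ i := by
        refine sum_congr rfl fun j hj => ?_
        rw [show X = -Y + (X + Y) by ring, add_pow, mul_sum, sum_mul]
        refine sum_congr rfl fun i hi => ?_
        have hpow : (X + Y) ^ (m - i) = (X + Y) ^ (j - i) * (X + Y) ^ (m - j) := by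
          rw [← pow_add]; congr 1; simp at hi hj; omega
        simp only [neg_add_cancel_comm, hpow]
        ring
    _ = ∑ i ∈ range (m + 1), ∑ l ∈ range (m - i + 1),
          Ring.choose (c + (i + l : ℕ)) (i + l) * (i + l).choose i * (X + Y) ^ (m - i) * (-Y) ^ i := by
        simp only [range_eq_Ico]
        rw [← sum_Ico_Ico_comm]
        refine sum_congr rfl fun i hi => ?_
        rw [sum_Ico_eq_sum_range, ← range_eq_Ico, ← Nat.sub_add_comm (by simp at hi; omega)]
    _ = _ := by
        refine sum_congr rfl fun i hi => ?_
        have hi : i ≤ m := by simp at hi; omega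
        have htrinomial (l : ℕ) : Ring.choose (c + (i + l : ℕ)) (i + l) * ((i + l).choose i : R)
            = Ring.choose (c + i + l) l * Ring.choose (c + i) i := by
          rw [mul_comm, ← nsmul_eq_mul, Nat.choose_symm_add, Nat.cast_add, ← add_assoc,
            Ring.choose_add_smul_choose]
        simp only [htrinomial, ← sum_mul, Ring.sum_range_choose_add_self]
        rw [add_assoc c, ← Nat.cast_add, Nat.add_sub_cancel' hi]

theorem genChoose_eq_choose {x : ℝ} {k : ℕ} (h : Real.Gamma (x - k + 1) ≠ 0) :
    genChoose x k = Ring.choose x k := by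
  induction k with
  | zero => simp_all [genChoose]
  | succ k ih =>
    have hΓ : Real.Gamma (x - k) ≠ 0 := by convert h using 2; push_cast; ring
    have hk : x - k ≠ 0 := fun h0 => hΓ (by rw [h0, Real.Gamma_zero])
    have hrec : Real.Gamma (x - k + 1) = (x - k) * Real.Gamma (x - k) := Real.Gamma_add_one hk
    have hchoose := Ring.succ_nsmul_choose_succ x k
    rw [nsmul_eq_mul, Nat.cast_succ, ← ih (by rw [hrec]; exact mul_ne_zero hk hΓ)] at hchoose
    rw [← mul_right_inj' (show (k + 1 : ℝ) ≠ 0 by positivity), hchoose]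
    unfold genChoose
    rw [hrec, show x - ((k + 1 : ℕ) : ℝ) + 1 = x - k by push_cast; ring, Nat.factorial_succ]
    push_cast
    field_simp

theorem Ppoly_alternative_form_general (κ : ℕ) (kf : ℝ) (hkf : ∀ n : ℕ, kf ≠ n) (X Y : ℝ) :
    Ppoly κ (2 - kf) X Y
      = ∑ j ∈ Finset.range (κ - 1),
          genChoose ((κ : ℝ) + (2 - kf) - 3) (κ - 2 - j) * genChoose ((j : ℝ) + (2 - kf) - 2) j *
            (X + Y) ^ (κ - 2 - j) * (-Y) ^ j := by
  obtain _ | _ | m := κ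
  · simp [Ppoly]
  · simp [Ppoly]
  have hΓ (p : ℕ) : Real.Gamma (p - kf) ≠ 0 :=
    Real.Gamma_ne_zero fun n h => hkf (p + n) (by push_cast; linarith)
  have hlower (j : ℕ) : genChoose ((j : ℝ) + (2 - kf) - 2) j = Ring.choose (-kf + j) j := by
    rw [genChoose_eq_choose] <;> ring_nf
    simpa using hΓ 1
  have hupper (j : ℕ) (hj : j ≤ m) :
      genChoose (((m + 1 + 1 : ℕ) : ℝ) + (2 - kf) - 3) (m + 1 + 1 - 2 - j)
        = Ring.choose (-kf + m + 1) (m - j) := by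
    rw [show m + 1 + 1 - 2 - j = m - j by omega, genChoose_eq_choose]
    · push_cast; ring_nf
    · convert hΓ (j + 2) using 2; push_cast [Nat.cast_sub hj]; ring
  calc Ppoly (m + 1 + 1) (2 - kf) X Y
      = ∑ j ∈ range (m + 1), Ring.choose (-kf + j) j * X ^ j * (X + Y) ^ (m - j) := by
        simp only [Ppoly, hlower]; rfl
    _ = _ := sum_choose_mul_pow_mul_add_pow (-kf) X Y m
    _ = _ := sum_congr rfl fun j hj => by rw [hupper j (by simp at hj; omega), hlower]; rfl

/-- For an integer `κ ≥ 2` and real `k_f ∉ ℕ`, with `b = 2 - k_f` and `a = κ` (so `b ≠ 1, 2`),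
`P_{a,b}(X,Y) = ∑_{j=0}^{a-2} C(a+b-3, a-2-j) C(j+b-2, j) (X+Y)^{a-2-j} (-Y)^j`. -/
theorem Ppoly_alternative_form (κ : ℕ) (hκ : 2 ≤ κ) (kf : ℝ) (hkf : ∀ n : ℕ, kf ≠ n)
    (hb1 : (2 - kf) ≠ 1) (hb2 : (2 - kf) ≠ 2) (X Y : ℝ) :
    Ppoly κ (2 - kf) X Y
      = ∑ j ∈ Finset.range (κ - 1),
          genChoose ((κ : ℝ) + (2 - kf) - 3) (κ - 2 - j) * genChoose ((j : ℝ) + (2 - kf) - 2) j *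
            (X + Y) ^ (κ - 2 - j) * (-Y) ^ j :=
  Ppoly_alternative_form_general κ kf hkf X Y
end

section
/- For positive integers m and r and a real number k_f < 1 with k_f not an integer, ∫_0^∞ Γ(1-k_f, 4π m y) y^{κ-2} e^{-4π r y} dy = -(4π)^{1-κ} m^{1-k_f} Γ(1-k_f) (κ-2)! r^{1-κ} ((r+m)^{1-k_g} P_{κ,2-k_f}(r,m) - m^{k_f-1}), where κ ≥ 2 is an integer, k_g = κ - k_f, and P_{a,b}(X,Y) = ∑_{j=0}^{a-2} C(j+b-2, j) X^j (X+Y)^{a-2-j}. -/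
open Real

/-!
Write `Γ(s, A y)` against the primitive `F(y) = -(n!/B^{n+1}) e^{-By} ∑_{i ≤ n} (By)^i/i!` of
`y^n e^{-By}` and integrate by parts. The boundary terms leave `Γ(s) n!/B^{n+1}`, and since
`d/dy Γ(s, A y) = -A (Ay)^{s-1} e^{-Ay}`, the remaining integral splits into the Gamma integrals
`∫ y^{s+i-1} e^{-(A+B)y} dy = Γ(s+i)/(A+B)^{s+i}`, whose ratios `Γ(s+i)/(i! Γ(s))` are the
binomial coefficients of `P`. With `A = 4πm`, `B = 4πr` the factors `4π` cancel in `A/(A+B)`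
and `B/(A+B)`.
-/

open MeasureTheory Set Filter Topology Nat

section UpperIncompleteGamma

variable {s : ℝ}

lemma intervalIntegrable_rpow_sub_one_mul_exp_neg (hs : 0 < s) (a b : ℝ) :
    IntervalIntegrable (fun t : ℝ => t ^ (s - 1) * exp (-t)) volume a b :=
  (intervalIntegral.intervalIntegrable_rpow' (by linarith)).mul_continuousOn (by fun_prop)

lemma integrableOn_rpow_sub_one_mul_exp_neg_Ioi (hs : 0 < s) :
    IntegrableOn (fun t : ℝ => t ^ (s - 1) * exp (-t)) (Ioi 0) :=
  (GammaIntegral_convergent hs).congr_fun (fun _ _ => mul_comm _ _) measurableSet_Ioi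

lemma integral_rpow_sub_one_mul_exp_neg_Ioi (hs : 0 < s) :
    ∫ t in Ioi 0, t ^ (s - 1) * exp (-t) = Gamma s := by
  rw [Gamma_eq_integral hs]
  exact setIntegral_congr_fun measurableSet_Ioi fun _ _ => mul_comm _ _

lemma uGamma_eq_Gamma_sub_integral (hs : 0 < s) {x : ℝ} (hx : 0 ≤ x) :
    uGamma s x = Gamma s - ∫ t in (0 : ℝ)..x, t ^ (s - 1) * exp (-t) := by
  rw [← integral_rpow_sub_one_mul_exp_neg_Ioi hs,
    ← intervalIntegral.integral_Ioi_sub_Ioi (integrableOn_rpow_sub_one_mul_exp_neg_Ioi hs) hx,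
    sub_sub_cancel, uGamma]

lemma uGamma_zero (hs : 0 < s) : uGamma s 0 = Gamma s := by
  simp [uGamma_eq_Gamma_sub_integral hs le_rfl]

lemma uGamma_nonneg {x : ℝ} (hx : 0 ≤ x) : 0 ≤ uGamma s x :=
  setIntegral_nonneg measurableSet_Ioi fun t ht => by
    have : 0 ≤ t := hx.trans (le_of_lt ht)
    positivity

lemma uGamma_le_Gamma (hs : 0 < s) {x : ℝ} (hx : 0 ≤ x) : uGamma s x ≤ Gamma s := by
  rw [uGamma_eq_Gamma_sub_integral hs hx, sub_le_self_iff]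
  exact intervalIntegral.integral_nonneg hx fun t ht => by
    have : 0 ≤ t := ht.1
    positivity

lemma continuousOn_uGamma (hs : 0 < s) : ContinuousOn (uGamma s) (Ici 0) := by
  have : Continuous fun x => Gamma s - ∫ t in (0 : ℝ)..x, t ^ (s - 1) * exp (-t) :=
    continuous_const.sub <|
      intervalIntegral.continuous_primitive (intervalIntegrable_rpow_sub_one_mul_exp_neg hs) 0
  exact this.continuousOn.congr fun x hx => uGamma_eq_Gamma_sub_integral hs hx

lemma hasDerivAt_uGamma (hs : 0 < s) {x : ℝ} (hx : 0 < x) :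
    HasDerivAt (uGamma s) (-(x ^ (s - 1) * exp (-x))) x := by
  have hcont : ContinuousAt (fun t : ℝ => t ^ (s - 1) * exp (-t)) x :=
    (continuousAt_rpow_const x _ (Or.inl hx.ne')).mul (by fun_prop)
  have hprim := intervalIntegral.integral_hasDerivAt_right
    (intervalIntegrable_rpow_sub_one_mul_exp_neg hs 0 x)
    ((Measurable.stronglyMeasurable (by fun_prop)).stronglyMeasurableAtFilter) hcont
  refine (((hasDerivAt_const x (Gamma s)).sub hprim).congr_of_eventuallyEq ?_).congr_deriv
    (zero_sub _)
  filter_upwards [Ioi_mem_nhds hx] with y hy using uGamma_eq_Gamma_sub_integral hs (le_of_lt hy)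

lemma tendsto_uGamma_atTop (hs : 0 < s) : Tendsto (uGamma s) atTop (𝓝 0) := by
  have h := (tendsto_const_nhds (x := Gamma s)).sub <| intervalIntegral_tendsto_integral_Ioi 0
    (integrableOn_rpow_sub_one_mul_exp_neg_Ioi hs) tendsto_id
  rw [integral_rpow_sub_one_mul_exp_neg_Ioi hs, sub_self] at h
  exact h.congr' <| (eventually_ge_atTop 0).mono fun x hx =>
    (uGamma_eq_Gamma_sub_integral hs hx).symm

end UpperIncompleteGamma

lemma integrableOn_rpow_sub_one_mul_exp_neg_mul_Ioi {a c : ℝ} (ha : 0 < a) (hc : 0 < c) :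
    IntegrableOn (fun y : ℝ => y ^ (a - 1) * exp (-(c * y))) (Ioi 0) :=
  .of_integral_ne_zero (by rw [integral_rpow_mul_exp_neg_mul_Ioi ha hc]; positivity)

lemma integrableOn_pow_mul_exp_neg_mul_Ioi (n : ℕ) {c : ℝ} (hc : 0 < c) :
    IntegrableOn (fun y : ℝ => y ^ n * exp (-(c * y))) (Ioi 0) := by
  simpa [rpow_natCast] using
    integrableOn_rpow_sub_one_mul_exp_neg_mul_Ioi (a := n + 1) (by positivity) hc

noncomputable def expPartialSum (n : ℕ) (x : ℝ) : ℝ :=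
  ∑ i ∈ Finset.range (n + 1), x ^ i / i !

lemma expPartialSum_zero_right (n : ℕ) : expPartialSum n 0 = 1 := by
  simp [expPartialSum, Finset.sum_range_succ']

lemma hasDerivAt_exp_neg_mul_expPartialSum (n : ℕ) (x : ℝ) :
    HasDerivAt (fun x => exp (-x) * expPartialSum n x) (-(exp (-x) * (x ^ n / n !))) x := by
  induction n with
  | zero => simpa [expPartialSum] using (hasDerivAt_neg x).exp
  | succ n ih =>
    have hsplit : (fun x => exp (-x) * expPartialSum (n + 1) x) =
        fun x => exp (-x) * expPartialSum n x + exp (-x) * (x ^ (n + 1) / (n + 1)!) := by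
      funext x
      rw [expPartialSum, Finset.sum_range_succ, ← expPartialSum]
      ring
    rw [hsplit]
    refine (ih.add (((hasDerivAt_neg x).exp).mul
      ((hasDerivAt_pow (n + 1) x).div_const _))).congr_deriv ?_
    rw [factorial_succ]
    push_cast
    field_simp
    ring

lemma tendsto_exp_neg_mul_expPartialSum_atTop (n : ℕ) :
    Tendsto (fun x => exp (-x) * expPartialSum n x) atTop (𝓝 0) := by
  have h := tendsto_finsetSum (Finset.range (n + 1)) fun i _ =>
    (tendsto_pow_mul_exp_neg_atTop_nhds_zero i).div_const (i ! : ℝ)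
  simp only [zero_div, Finset.sum_const_zero] at h
  refine h.congr fun x => ?_
  rw [expPartialSum, Finset.mul_sum]
  exact Finset.sum_congr rfl fun i _ => by ring

noncomputable def powExpPrimitive (n : ℕ) (B y : ℝ) : ℝ :=
  -(n ! / B ^ (n + 1) * (exp (-(B * y)) * expPartialSum n (B * y)))

lemma powExpPrimitive_zero_right (n : ℕ) (B : ℝ) :
    powExpPrimitive n B 0 = -(n ! / B ^ (n + 1)) := by
  simp [powExpPrimitive, expPartialSum_zero_right]

lemma hasDerivAt_powExpPrimitive (n : ℕ) {B : ℝ} (hB : B ≠ 0) (y : ℝ) :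
    HasDerivAt (powExpPrimitive n B) (y ^ n * exp (-(B * y))) y := by
  unfold powExpPrimitive
  refine (((hasDerivAt_exp_neg_mul_expPartialSum n (B * y)).comp y
    ((hasDerivAt_id y).const_mul B)).const_mul (n ! / B ^ (n + 1) : ℝ)).fun_neg.congr_deriv ?_
  field_simp
  ring

lemma tendsto_powExpPrimitive_atTop (n : ℕ) {B : ℝ} (hB : 0 < B) :
    Tendsto (powExpPrimitive n B) atTop (𝓝 0) := by
  unfold powExpPrimitive
  have h := ((tendsto_exp_neg_mul_expPartialSum_atTop n).comp
    (tendsto_id.const_mul_atTop hB)).const_mul (n ! / B ^ (n + 1) : ℝ) |>.neg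
  simpa using h

lemma genChoose_natCast_add_sub_one (s : ℝ) (i : ℕ) :
    genChoose (i + s - 1) i = Gamma (s + i) / (i ! * Gamma s) := by
  rw [genChoose, show (i : ℝ) + s - 1 + 1 = s + i by ring,
    show (i : ℝ) + s - 1 - i + 1 = s by ring]

section IntegrationByParts

variable {s A B : ℝ}

lemma eqOn_neg_mul_powExpPrimitive (hA : 0 < A) (n : ℕ) :
    EqOn (fun y => -(A * ((A * y) ^ (s - 1) * exp (-(A * y)))) * powExpPrimitive n B y)
      (fun y : ℝ => n ! / B ^ (n + 1) * ∑ i ∈ Finset.range (n + 1),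
        A ^ s * B ^ i / i ! * (y ^ (s + i - 1) * exp (-((A + B) * y)))) (Ioi 0) := by
  intro y (hy : 0 < y)
  simp only [powExpPrimitive, expPartialSum, Finset.mul_sum, neg_mul_neg]
  refine Finset.sum_congr rfl fun i _ => ?_
  rw [mul_rpow hA.le hy.le, show s + i - 1 = (s - 1) + i by ring, rpow_add hy, rpow_natCast,
    rpow_sub_one hA.ne', add_mul, neg_add, exp_add]
  field_simp
  ring

lemma integrableOn_neg_mul_powExpPrimitive (hs : 0 < s) (hA : 0 < A) (hB : 0 < B) (n : ℕ) :
    IntegrableOn (fun y => -(A * ((A * y) ^ (s - 1) * exp (-(A * y)))) * powExpPrimitive n B y)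
      (Ioi 0) := by
  refine IntegrableOn.congr_fun ?_ (eqOn_neg_mul_powExpPrimitive hA n).symm measurableSet_Ioi
  refine (integrable_finsetSum _ fun i _ => ?_).const_mul _
  exact (integrableOn_rpow_sub_one_mul_exp_neg_mul_Ioi (by positivity) (by positivity)).const_mul _

lemma integral_neg_mul_powExpPrimitive (hs : 0 < s) (hA : 0 < A) (hB : 0 < B) (n : ℕ) :
    ∫ y in Ioi 0, -(A * ((A * y) ^ (s - 1) * exp (-(A * y)))) * powExpPrimitive n B y =
      n ! * Gamma s / B ^ (n + 1) * ((A / (A + B)) ^ s *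
        ∑ i ∈ Finset.range (n + 1), genChoose (i + s - 1) i * (B / (A + B)) ^ i) := by
  rw [setIntegral_congr_fun measurableSet_Ioi (eqOn_neg_mul_powExpPrimitive hA n),
    integral_const_mul, integral_finsetSum _ fun i _ =>
      ((integrableOn_rpow_sub_one_mul_exp_neg_mul_Ioi (by positivity) (by positivity)).const_mul _),
    Finset.mul_sum, Finset.mul_sum, Finset.mul_sum]
  refine Finset.sum_congr rfl fun i _ => ?_
  rw [integral_const_mul, integral_rpow_mul_exp_neg_mul_Ioi (by positivity) (by positivity),
    genChoose_natCast_add_sub_one, div_rpow hA.le (by positivity), one_div,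
    inv_rpow (by positivity), rpow_add (by positivity), rpow_natCast, div_pow]
  have : Gamma s ≠ 0 := (Gamma_pos_of_pos hs).ne'
  field_simp

lemma continuousOn_uGamma_const_mul (hs : 0 < s) (hA : 0 ≤ A) :
    ContinuousOn (fun y => uGamma s (A * y)) (Ici 0) :=
  (continuousOn_uGamma hs).comp (continuousOn_const.mul continuousOn_id)
    fun _ hy => mul_nonneg hA hy

lemma hasDerivAt_uGamma_const_mul (hs : 0 < s) (hA : 0 < A) {y : ℝ} (hy : 0 < y) :
    HasDerivAt (fun y => uGamma s (A * y)) (-(A * ((A * y) ^ (s - 1) * exp (-(A * y))))) y :=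
  ((hasDerivAt_uGamma hs (mul_pos hA hy)).comp y ((hasDerivAt_id y).const_mul A)).congr_deriv
    (by ring)

lemma integrableOn_uGamma_const_mul_mul_pow_mul_exp_neg (hs : 0 < s) (hA : 0 ≤ A) (hB : 0 < B)
    (n : ℕ) :
    IntegrableOn (fun y => uGamma s (A * y) * (y ^ n * exp (-(B * y)))) (Ioi 0) := by
  refine (integrableOn_pow_mul_exp_neg_mul_Ioi n hB).bdd_mul (c := Gamma s)
    (((continuousOn_uGamma_const_mul hs hA).mono Ioi_subset_Ici_self).aestronglyMeasurable
      measurableSet_Ioi) (ae_restrict_of_forall_mem measurableSet_Ioi fun y hy => ?_)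
  have hAy : 0 ≤ A * y := mul_nonneg hA (le_of_lt hy)
  rw [norm_of_nonneg (uGamma_nonneg hAy)]
  exact uGamma_le_Gamma hs hAy

theorem integral_uGamma_mul_pow_mul_exp_neg (hs : 0 < s) (hA : 0 < A) (hB : 0 < B) (n : ℕ) :
    ∫ y in Ioi 0, uGamma s (A * y) * y ^ n * exp (-(B * y)) =
      n ! * Gamma s / B ^ (n + 1) * (1 - (A / (A + B)) ^ s *
        ∑ i ∈ Finset.range (n + 1), genChoose (i + s - 1) i * (B / (A + B)) ^ i) := by
  have hv_cont : Continuous (powExpPrimitive n B) :=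
    continuous_iff_continuousAt.2 fun y => (hasDerivAt_powExpPrimitive n hB.ne' y).continuousAt
  have h_zero : Tendsto (fun y => uGamma s (A * y) * powExpPrimitive n B y) (𝓝[>] 0)
      (𝓝 (Gamma s * -(n ! / B ^ (n + 1)))) := by
    have := (((continuousOn_uGamma_const_mul hs hA.le).fun_mul hv_cont.continuousOn) 0
      self_mem_Ici).mono Ioi_subset_Ici_self
    simpa [uGamma_zero hs, powExpPrimitive_zero_right] using this.tendsto
  have h_infty : Tendsto (fun y => uGamma s (A * y) * powExpPrimitive n B y) atTop (𝓝 0) := by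
    simpa using ((tendsto_uGamma_atTop hs).comp (tendsto_id.const_mul_atTop hA)).mul
      (tendsto_powExpPrimitive_atTop n hB)
  have hibp := integral_Ioi_mul_deriv_eq_deriv_mul
    (fun y hy => hasDerivAt_uGamma_const_mul hs hA hy)
    (fun y _ => hasDerivAt_powExpPrimitive n hB.ne' y)
    (integrableOn_uGamma_const_mul_mul_pow_mul_exp_neg hs hA.le hB n)
    (integrableOn_neg_mul_powExpPrimitive hs hA hB n) h_zero h_infty
  simp_rw [mul_assoc]
  rw [hibp, integral_neg_mul_powExpPrimitive hs hA hB n]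
  ring

end IntegrationByParts

lemma Ppoly_add_two_add_one (n : ℕ) (s : ℝ) {X Y : ℝ} (h : X + Y ≠ 0) :
    Ppoly (n + 2) (s + 1) X Y =
      (X + Y) ^ n *
        ∑ j ∈ Finset.range (n + 1), genChoose (j + s - 1) j * (X / (X + Y)) ^ j := by
  rw [Ppoly, show n + 2 - 1 = n + 1 by omega, Finset.mul_sum]
  refine Finset.sum_congr rfl fun j hj => ?_
  have hjn : j ≤ n := Finset.mem_range_succ_iff.mp hj
  rw [show j + (s + 1) - 2 = j + s - 1 by ring, show n + 2 - 2 - j = n - j by omega, div_pow,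
    ← pow_sub_mul_pow (X + Y) hjn]
  field_simp

theorem incomplete_gamma_integral_Ppoly_general (m r κ : ℕ) (hm : 0 < m) (hr : 0 < r) (hκ : 2 ≤ κ)
    (kf : ℝ) (hkf1 : kf < 1) :
    ∫ y in Set.Ioi (0 : ℝ), uGamma (1 - kf) (4 * π * m * y) * y ^ (κ - 2) * Real.exp (-(4 * π * r * y))
      = -((4 * π) ^ (1 - (κ : ℝ)) * (m : ℝ) ^ (1 - kf) * Real.Gamma (1 - kf) *
          ((κ - 2).factorial : ℝ) * (r : ℝ) ^ (1 - (κ : ℝ)) *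
          (((r : ℝ) + (m : ℝ)) ^ (1 - ((κ : ℝ) - kf)) * Ppoly κ (2 - kf) (r : ℝ) (m : ℝ)
            - (m : ℝ) ^ (kf - 1))) := by
  obtain ⟨n, rfl⟩ := Nat.exists_eq_add_of_le' hκ
  have hm' : (0 : ℝ) < m := by exact_mod_cast hm
  have hr' : (0 : ℝ) < r := by exact_mod_cast hr
  have hs : 0 < 1 - kf := by linarith
  have hratio : ∀ x : ℝ, 4 * π * x / (4 * π * m + 4 * π * r) = x / (r + m) := fun x => by
    rw [← mul_add, add_comm (m : ℝ), mul_div_mul_left _ _ (by positivity)]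
  have hpow : ∀ x : ℝ, 0 ≤ x → x ^ (1 - ((n + 2 : ℕ) : ℝ)) = (x ^ (n + 1))⁻¹ := by
    intro x hx
    rw [show 1 - ((n + 2 : ℕ) : ℝ) = -((n + 1 : ℕ) : ℝ) by push_cast; ring, rpow_neg hx,
      rpow_natCast]
  rw [Nat.add_sub_cancel, integral_uGamma_mul_pow_mul_exp_neg hs (by positivity) (by positivity),
    hratio, hratio, show 2 - kf = (1 - kf) + 1 by ring,
    Ppoly_add_two_add_one n _ (by positivity : (r : ℝ) + m ≠ 0)]
  rw [hpow _ (by positivity), hpow _ hr'.le, show 1 - (((n + 2 : ℕ) : ℝ) - kf) = -((1 - kf) + n) by push_cast; ring,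
    show kf - 1 = -(1 - kf) by ring, rpow_neg hm'.le, rpow_neg (by positivity),
    rpow_add (by positivity), rpow_natCast, div_rpow hm'.le (by positivity), mul_pow]
  field_simp
  ring

/-- For positive integers `m, r`, integer `κ ≥ 2`, and real `k_f < 1` not an integer,
with `k_g = κ - k_f`:
`∫_0^∞ Γ(1-k_f, 4πmy) y^{κ-2} e^{-4πry} dy
  = -(4π)^{1-κ} m^{1-k_f} Γ(1-k_f) (κ-2)! r^{1-κ} ((r+m)^{1-k_g} P_{κ,2-k_f}(r,m) - m^{k_f-1})`. -/
theorem incomplete_gamma_integral_Ppoly (m r κ : ℕ) (hm : 0 < m) (hr : 0 < r) (hκ : 2 ≤ κ)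
    (kf : ℝ) (hkf1 : kf < 1) (hkf : ∀ j : ℤ, kf ≠ j) :
    ∫ y in Set.Ioi (0 : ℝ), uGamma (1 - kf) (4 * π * m * y) * y ^ (κ - 2) * Real.exp (-(4 * π * r * y))
      = -((4 * π) ^ (1 - (κ : ℝ)) * (m : ℝ) ^ (1 - kf) * Real.Gamma (1 - kf) *
          ((κ - 2).factorial : ℝ) * (r : ℝ) ^ (1 - (κ : ℝ)) *
          (((r : ℝ) + (m : ℝ)) ^ (1 - ((κ : ℝ) - kf)) * Ppoly κ (2 - kf) (r : ℝ) (m : ℝ)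
            - (m : ℝ) ^ (kf - 1))) :=
  incomplete_gamma_integral_Ppoly_general m r κ hm hr hκ kf hkf1
end

section
/- For τ ∈ ℍ and positive integer m, setting v = Im τ and q = e^{2πiτ}: -(2π)^{-1/2} i ∫_{-\bar{τ}}^{i∞} e^{2πi m^2 w} (-i(w+τ))^{-3/2} dw = m Γ(-1/2, 4π m^2 v) q^{-m^2}, where the integral is along the vertical line from -\bar{τ} to i∞ and Γ(-1/2, x) is the incomplete Gamma function. -/
open Real

open MeasureTheory in
lemma integral_comp_add_right_Ioi' (g : ℝ → ℝ) (a c : ℝ) :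
    (∫ x in Set.Ioi a, g (x + c)) = ∫ x in Set.Ioi (a + c), g x := by
  rw [← integral_indicator measurableSet_Ioi, ← integral_indicator measurableSet_Ioi,
    ← integral_add_right_eq_self (fun x => (Set.Ioi (a+c)).indicator g x) c]
  congr 1
  ext x
  simp only [Set.indicator_apply, Set.mem_Ioi, add_lt_add_iff_right]

open MeasureTheory in
lemma real_integral_eq (a c : ℝ) (ha : 0 < a) (hc : 0 < c) :
    (∫ t in Set.Ioi (0:ℝ), Real.exp (-(a * t)) * (c + t) ^ (-(3/2) : ℝ))
      = a ^ ((1:ℝ)/2) * Real.exp (a * c) * uGamma (-(1/2)) (a * c) := by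
  have h1 : (∫ t in Set.Ioi (0:ℝ), Real.exp (-(a * t)) * (c + t) ^ (-(3/2) : ℝ))
      = ∫ t in Set.Ioi (0:ℝ),
          a ^ ((3:ℝ)/2) * Real.exp (a * c) *
            ((fun s => s ^ (-(3/2) : ℝ) * Real.exp (-s)) (a * (t + c))) := by
    apply setIntegral_congr_fun measurableSet_Ioi
    intro t ht
    have ht0 : 0 < t := Set.mem_Ioi.mp ht
    have htc : (0:ℝ) < t + c := by linarith
    simp only
    rw [Real.mul_rpow ha.le htc.le, add_comm c t]
    have e : Real.exp (a*c) * Real.exp (-(a*(t+c))) = Real.exp (-(a*t)) := by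
      rw [← Real.exp_add]; ring_nf
    have hpow : a ^ ((3:ℝ)/2) * a ^ (-(3/2):ℝ) = 1 := by
      rw [← Real.rpow_add ha]; norm_num
    rw [show a ^ ((3:ℝ)/2) * Real.exp (a*c) * (a ^ (-(3/2):ℝ) * (t+c) ^ (-(3/2):ℝ) * Real.exp (-(a*(t+c))))
        = (a ^ ((3:ℝ)/2) * a ^ (-(3/2):ℝ)) * ((Real.exp (a*c) * Real.exp (-(a*(t+c)))) * (t+c) ^ (-(3/2):ℝ)) from by ring,
      hpow, e, one_mul]
  rw [h1, integral_const_mul]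
  have h2 : (∫ t in Set.Ioi (0:ℝ), (fun s => s ^ (-(3/2) : ℝ) * Real.exp (-s)) (a * (t + c)))
      = a⁻¹ * uGamma (-(1/2)) (a * c) := by
    rw [integral_comp_add_right_Ioi' (fun x => (fun s => s ^ (-(3/2):ℝ) * Real.exp (-s)) (a * x)) 0 c,
      zero_add, integral_comp_mul_left_Ioi (fun s => s ^ (-(3/2):ℝ) * Real.exp (-s)) c ha, smul_eq_mul]
    congr 1
    unfold uGamma
    apply setIntegral_congr_fun measurableSet_Ioi
    intro t _
    norm_num
  rw [h2]
  have h3 : a ^ ((3:ℝ)/2) * a⁻¹ = a ^ ((1:ℝ)/2) := by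
    rw [← Real.rpow_neg_one a, ← Real.rpow_add ha]; norm_num
  calc a ^ ((3:ℝ)/2) * Real.exp (a*c) * (a⁻¹ * uGamma (-(1/2)) (a*c))
      = (a ^ ((3:ℝ)/2) * a⁻¹) * Real.exp (a*c) * uGamma (-(1/2)) (a*c) := by ring
    _ = _ := by rw [h3]

open MeasureTheory in
/-- For `τ ∈ ℍ`, `v = Im τ`, `q = e^{2πiτ}` and a positive integer `m`:
`-(2π)^{-1/2} i ∫_{-τ̄}^{i∞} e^{2πim²w} (-i(w+τ))^{-3/2} dw = m Γ(-1/2, 4πm²v) q^{-m²}`,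
the integral being along the vertical path `w = -τ̄ + it'`, `t' ∈ (0,∞)` (so `dw = i dt'`). -/
theorem nonholomorphic_part_term (τ : ℂ) (hτ : 0 < τ.im) (m : ℕ) (hm : 0 < m) :
    -(((2 * π) ^ (-(1/2) : ℝ) : ℝ) : ℂ) * Complex.I *
        ∫ t in Set.Ioi (0 : ℝ),
          Complex.exp (2 * (π : ℂ) * Complex.I * (m : ℂ) ^ 2 * (-(starRingEnd ℂ) τ + Complex.I * t)) *
            (-Complex.I * ((-(starRingEnd ℂ) τ + Complex.I * t) + τ)) ^ (-(3/2) : ℂ) * Complex.I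
      = (m : ℂ) * ((uGamma (-(1/2)) (4 * π * m ^ 2 * τ.im) : ℝ) : ℂ) *
          Complex.exp (2 * (π : ℂ) * Complex.I * τ) ^ (-((m : ℤ) ^ 2)) := by
  have hm' : (0:ℝ) < (m:ℝ) := by exact_mod_cast hm
  have hπ : (0:ℝ) < π := Real.pi_pos
  have ha : (0:ℝ) < 2*π*(m:ℝ)^2 := by positivity
  have hsc := Complex.sub_conj τ
  push_cast at hsc
  -- Step 1: rewrite the integral
  have hint : (∫ t in Set.Ioi (0 : ℝ),
          Complex.exp (2 * (π : ℂ) * Complex.I * (m : ℂ) ^ 2 * (-(starRingEnd ℂ) τ + Complex.I * t)) *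
            (-Complex.I * ((-(starRingEnd ℂ) τ + Complex.I * t) + τ)) ^ (-(3/2) : ℂ) * Complex.I)
      = (Complex.exp (2 * (π : ℂ) * Complex.I * (m : ℂ) ^ 2 * (-(starRingEnd ℂ) τ)) * Complex.I) *
          ((∫ t in Set.Ioi (0:ℝ), Real.exp (-(2*π*(m:ℝ)^2 * t)) * (2*τ.im + t) ^ (-(3/2) : ℝ) : ℝ) : ℂ) := by
    have hof : ((∫ t in Set.Ioi (0:ℝ), Real.exp (-(2*π*(m:ℝ)^2 * t)) * (2*τ.im + t) ^ (-(3/2) : ℝ) : ℝ) : ℂ)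
        = ∫ t in Set.Ioi (0:ℝ), ((Real.exp (-(2*π*(m:ℝ)^2 * t)) * (2*τ.im + t) ^ (-(3/2) : ℝ) : ℝ) : ℂ) :=
      (integral_ofReal (𝕜 := ℂ)).symm
    rw [hof, ← integral_const_mul]
    apply setIntegral_congr_fun measurableSet_Ioi
    intro t ht
    have ht0 : (0:ℝ) < t := Set.mem_Ioi.mp ht
    have h2vt : (0:ℝ) < 2*τ.im + t := by linarith
    dsimp only
    have hw : -Complex.I * ((-(starRingEnd ℂ) τ + Complex.I * t) + τ) = ((2*τ.im + t : ℝ) : ℂ) := by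
      push_cast
      linear_combination (-Complex.I) * hsc - ((t:ℂ) + 2*(τ.im:ℂ)) * Complex.I_sq
    have hexp : Complex.exp (2 * (π : ℂ) * Complex.I * (m : ℂ) ^ 2 * (-(starRingEnd ℂ) τ + Complex.I * t))
        = Complex.exp (2 * (π : ℂ) * Complex.I * (m : ℂ) ^ 2 * (-(starRingEnd ℂ) τ)) *
            ((Real.exp (-(2*π*(m:ℝ)^2 * t)) : ℝ) : ℂ) := by
      rw [Complex.ofReal_exp, ← Complex.exp_add]
      congr 1
      push_cast
      linear_combination (2*(π:ℂ)*(m:ℂ)^2*(t:ℂ)) * Complex.I_sq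
    rw [hexp, hw, show (-(3/2) : ℂ) = ((-(3/2) : ℝ) : ℂ) from by norm_num,
      ← Complex.ofReal_cpow h2vt.le]
    push_cast
    ring
  rw [hint, real_integral_eq (2*π*(m:ℝ)^2) (2*τ.im) ha (by linarith),
    show (2*π*(m:ℝ)^2) * (2*τ.im) = 4*π*(m:ℝ)^2*τ.im from by ring]
  -- key scalar identity
  have key1 : ((2*π) ^ (-(1/2) : ℝ) : ℝ) * ((2*π*(m:ℝ)^2) ^ ((1:ℝ)/2)) = (m:ℝ) := by
    have h2π : (0:ℝ) < 2*π := by positivity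
    rw [show (2*π*(m:ℝ)^2 : ℝ) = (2*π) * ((m:ℝ)^2) from by ring,
      Real.mul_rpow h2π.le (sq_nonneg _), ← mul_assoc, ← Real.rpow_add h2π,
      ← Real.rpow_natCast (m:ℝ) 2, ← Real.rpow_mul hm'.le]
    norm_num
  have key1c : (((2*π) ^ (-(1/2) : ℝ) : ℝ) : ℂ) * (((2*π*(m:ℝ)^2) ^ ((1:ℝ)/2) : ℝ) : ℂ) = (m:ℂ) := by
    exact_mod_cast congrArg (Complex.ofReal) key1
  -- key exponential identity
  have key2 : Complex.exp (2 * (π : ℂ) * Complex.I * (m : ℂ) ^ 2 * (-(starRingEnd ℂ) τ)) *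
        ((Real.exp (4*π*(m:ℝ)^2*τ.im) : ℝ) : ℂ)
      = Complex.exp (2 * (π : ℂ) * Complex.I * τ) ^ (-((m : ℤ) ^ 2)) := by
    rw [Complex.ofReal_exp, ← Complex.exp_add, ← Complex.exp_int_mul]
    congr 1
    push_cast
    linear_combination (2*(π:ℂ)*(m:ℂ)^2*Complex.I) * hsc + (4*(π:ℂ)*(m:ℂ)^2*(τ.im:ℂ)) * Complex.I_sq
  have hxyz : (((2*π*(m:ℝ)^2) ^ ((1:ℝ)/2) * Real.exp (4*π*(m:ℝ)^2*τ.im) * uGamma (-(1/2)) (4*π*(m:ℝ)^2*τ.im) : ℝ) : ℂ)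
      = (((2*π*(m:ℝ)^2) ^ ((1:ℝ)/2) : ℝ) : ℂ) * ((Real.exp (4*π*(m:ℝ)^2*τ.im) : ℝ) : ℂ) *
          ((uGamma (-(1/2)) (4*π*(m:ℝ)^2*τ.im) : ℝ) : ℂ) := by push_cast; ring
  have hII : Complex.I * Complex.I = -1 := Complex.I_mul_I
  calc -(((2 * π) ^ (-(1/2) : ℝ) : ℝ) : ℂ) * Complex.I *
        (Complex.exp (2 * (π : ℂ) * Complex.I * (m : ℂ) ^ 2 * (-(starRingEnd ℂ) τ)) * Complex.I *
          (((2*π*(m:ℝ)^2) ^ ((1:ℝ)/2) * Real.exp (4*π*(m:ℝ)^2*τ.im) * uGamma (-(1/2)) (4*π*(m:ℝ)^2*τ.im) : ℝ) : ℂ))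
      = ((((2*π) ^ (-(1/2) : ℝ) : ℝ) : ℂ) * (((2*π*(m:ℝ)^2) ^ ((1:ℝ)/2) : ℝ) : ℂ)) *
          ((uGamma (-(1/2)) (4*π*(m:ℝ)^2*τ.im) : ℝ) : ℂ) *
          (Complex.exp (2 * (π : ℂ) * Complex.I * (m : ℂ) ^ 2 * (-(starRingEnd ℂ) τ)) *
            ((Real.exp (4*π*(m:ℝ)^2*τ.im) : ℝ) : ℂ)) * (-(Complex.I * Complex.I)) := by
        rw [hxyz]; ring
    _ = (m : ℂ) * ((uGamma (-(1/2)) (4*π*(m:ℝ)^2*τ.im) : ℝ) : ℂ) *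
          Complex.exp (2 * (π : ℂ) * Complex.I * τ) ^ (-((m : ℤ) ^ 2)) := by
        rw [hII, key1c, key2]; ring
end

section
/- For positive integers m < n and integer κ ≥ 2 and real k_f ∉ ℤ with k_g = κ - k_f, the hypergeometric identity holds: ₂F₁(1, k_g, κ; 1 - m/n) = ((κ-1)/(k_f-1)) (1 - m/n)^{1-κ} ₂F₁(1-k_f, 2-κ, 2-k_f; m/n) + (Γ(κ)Γ(1-k_f)/Γ(k_g)) (1 - m/n)^{1-κ} (m/n)^{k_f-1}. -/
open Finset Polynomial
open scoped Nat

theorem ascPochhammer_eval_mul_eval_add {R : Type*} [CommSemiring R] (a : R) (n m : ℕ) :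
    (ascPochhammer R n).eval a * (ascPochhammer R m).eval (a + n) =
      (ascPochhammer R (n + m)).eval a := by
  rw [← ascPochhammer_mul, eval_mul, eval_comp]
  simp

theorem ascPochhammer_eval_succ_left {R : Type*} [CommSemiring R] (a : R) (n : ℕ) :
    (ascPochhammer R (n + 1)).eval a = a * (ascPochhammer R n).eval (a + 1) := by
  simpa [add_comm 1 n] using (ascPochhammer_eval_mul_eval_add a 1 n).symm

theorem ascPochhammer_eval_neg_natCast {R : Type*} [CommRing R] (M i : ℕ) :
    (ascPochhammer R i).eval (-(M : R)) = (-1) ^ i * M.choose i * i ! := by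
  rw [ascPochhammer_eval_neg_eq_descPochhammer, descPochhammer_eval_eq_descFactorial,
    Nat.descFactorial_eq_factorial_mul_choose]
  push_cast
  ring

theorem ascPochhammer_eval_ne_zero {K : Type*} [Field K] {a : K} (ha : ∀ k : ℕ, a + k ≠ 0)
    (n : ℕ) : (ascPochhammer K n).eval a ≠ 0 := by
  rw [ne_eq, ascPochhammer_eval_eq_zero_iff]
  rintro ⟨k, -, hk⟩
  exact ha k (by rw [hk]; ring)

theorem one_sub_pow_eq_sum {R : Type*} [CommRing R] (x : R) (n : ℕ) :
    (1 - x) ^ n = ∑ i ∈ range (n + 1), (-1) ^ i * n.choose i * x ^ i := by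
  rw [sub_eq_neg_add, add_pow]
  refine sum_congr rfl fun i _ ↦ ?_
  rw [one_pow, neg_pow]
  ring

theorem Real.Gamma_add_nat_eq_ascPochhammer_mul {a : ℝ} (ha : ∀ k : ℕ, a + k ≠ 0)
    (n : ℕ) : Real.Gamma (a + n) = (ascPochhammer ℝ n).eval a * Real.Gamma a := by
  induction n with
  | zero => simp
  | succ n ih =>
    rw [Nat.cast_succ, ← add_assoc, Real.Gamma_add_one (ha n), ih, ascPochhammer_succ_eval]
    ring

theorem hasSum_ascPochhammer_div_factorial_mul_pow (a : ℝ) {z : ℝ} (hz : |z| < 1) :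
    HasSum (fun n ↦ (ascPochhammer ℝ n).eval a / n ! * z ^ n) ((1 - z) ^ (-a)) := by
  have hsum := (Real.one_div_one_sub_rpow_hasFPowerSeriesOnBall_zero a).hasSum
    (y := z) (by simpa [enorm_eq_nnnorm, ← NNReal.coe_lt_one] using hz)
  rw [zero_add, one_div, ← Real.rpow_neg (by linarith [le_abs_self z])] at hsum
  refine hsum.congr_fun fun n ↦ ?_
  rw [FormalMultilinearSeries.ofScalars_apply_eq, smul_eq_mul, ← Ring.multichoose_eq]
  congr 1
  rw [div_eq_iff (by positivity), mul_comm, ← nsmul_eq_mul,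
    Ring.factorial_nsmul_multichoose_eq_ascPochhammer, ← ascPochhammer_smeval_eq_eval,
    ascPochhammer_smeval_cast]

theorem pow_mul_hyp2F1_one_add_nat {a z : ℝ} (ha : ∀ k : ℕ, a + k ≠ 0) (hz : |z| < 1)
    (N : ℕ) : z ^ N * hyp2F1 1 (a + N) (N + 1) z =
      N ! / (ascPochhammer ℝ N).eval a *
        ((1 - z) ^ (-a) - ∑ j ∈ range N, (ascPochhammer ℝ j).eval a / j ! * z ^ j) := by
  have hbin := hasSum_ascPochhammer_div_factorial_mul_pow a hz
  have haN := ascPochhammer_eval_ne_zero ha N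
  rw [← hbin.tsum_eq, ← hbin.summable.sum_add_tsum_nat_add N, add_sub_cancel_left, hyp2F1,
    ← tsum_mul_left, ← tsum_mul_left]
  congr 1 with j
  have hpoch := ascPochhammer_eval_mul_eval_add a N j
  have hfact := factorial_mul_ascPochhammer ℝ N j
  rw [ascPochhammer_eval_one, add_comm j N, ← hpoch, ← hfact]
  field_simp
  ring

theorem hyp2F1_neg_nat_eq_sum {a : ℝ} (ha : ∀ k : ℕ, a + k ≠ 0) {M L : ℕ} (hML : M < L)
    (x : ℝ) : hyp2F1 a (-M) (a + 1) x =
      ∑ i ∈ range L, (-1) ^ i * M.choose i * (a / (a + i)) * x ^ i := by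
  rw [hyp2F1, tsum_eq_sum (s := range L)]
  · refine sum_congr rfl fun i _ ↦ ?_
    have hshift :
        (ascPochhammer ℝ i).eval a * (a + i) = a * (ascPochhammer ℝ i).eval (a + 1) := by
      rw [← ascPochhammer_succ_eval, ascPochhammer_eval_succ_left]
    have hpoch := ascPochhammer_eval_ne_zero (a := a + 1)
      (fun k h ↦ ha (k + 1) (by push_cast; linarith)) i
    have hai := ha i
    rw [ascPochhammer_eval_neg_natCast]
    field_simp
    linear_combination M.choose i * x ^ i * hshift
  · intro i hi
    rw [ascPochhammer_eval_neg_natCast, Nat.choose_eq_zero_of_lt (by simp at hi; omega)]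
    simp

theorem hyp2F1_neg_nat_contiguous {a : ℝ} (ha : ∀ k : ℕ, a + k ≠ 0) (M : ℕ) (x : ℝ) :
    (a + (M + 1)) * hyp2F1 a (-(M + 1 : ℕ)) (a + 1) x =
      (M + 1) * hyp2F1 a (-M) (a + 1) x + a * (1 - x) ^ (M + 1) := by
  rw [hyp2F1_neg_nat_eq_sum ha (lt_add_one _), hyp2F1_neg_nat_eq_sum ha (by omega : M < M + 2),
    one_sub_pow_eq_sum, mul_sum, mul_sum, mul_sum, ← sum_add_distrib]
  refine sum_congr rfl fun i hi ↦ ?_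
  have hi : i ≤ M + 1 := by simpa [Nat.lt_succ_iff] using hi
  have hchoose := Nat.choose_mul_succ_eq M i
  rw [← Nat.cast_inj (R := ℝ)] at hchoose
  push_cast [hi] at hchoose
  have hai := ha i
  field_simp
  linear_combination -a * x ^ i * hchoose

theorem factorial_mul_sum_ascPochhammer_mul_one_sub_pow {a : ℝ} (ha : ∀ k : ℕ, a + k ≠ 0)
    (M : ℕ) (x : ℝ) :
    M ! * ∑ j ∈ range (M + 1), (ascPochhammer ℝ j).eval a / j ! * (1 - x) ^ j =
      (ascPochhammer ℝ M).eval (a + 1) * hyp2F1 a (-M) (a + 1) x := by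
  induction M with
  | zero =>
    rw [hyp2F1_neg_nat_eq_sum ha zero_lt_one]
    simpa using (div_self (by simpa using ha 0)).symm
  | succ M ih =>
    have hrec := hyp2F1_neg_nat_contiguous ha M x
    rw [sum_range_succ, mul_add, Nat.factorial_succ, Nat.cast_mul, mul_assoc, ih,
      ascPochhammer_succ_eval M (a + 1), ascPochhammer_eval_succ_left a M]
    field_simp
    push_cast at hrec ⊢
    linear_combination -(ascPochhammer ℝ M).eval (a + 1) * hrec

theorem hyp2F1_one_add_nat_one_sub {a x : ℝ} (ha : ∀ k : ℕ, a + k ≠ 0) (hx0 : 0 < x)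
    (hx1 : x < 1) (M : ℕ) :
    hyp2F1 1 (a + (M + 1 : ℕ)) ((M + 1 : ℕ) + 1) (1 - x) =
      (M + 1) / (-a) * ((1 - x) ^ (M + 1))⁻¹ * hyp2F1 a (-M) (a + 1) x +
        Real.Gamma ((M + 1 : ℕ) + 1) * Real.Gamma a / Real.Gamma (a + (M + 1 : ℕ)) *
          ((1 - x) ^ (M + 1))⁻¹ * x ^ (-a) := by
  have hseries := pow_mul_hyp2F1_one_add_nat ha (z := 1 - x)
    (abs_lt.2 ⟨by linarith, by linarith⟩) (M + 1)
  rw [sub_sub_cancel] at hseries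
  have hF := eq_div_of_mul_eq (by positivity) ((mul_comm _ _).trans hseries)
  have hT := eq_div_of_mul_eq (by positivity)
    ((mul_comm _ _).trans (factorial_mul_sum_ascPochhammer_mul_one_sub_pow ha M x))
  have hGa : Real.Gamma a ≠ 0 := Real.Gamma_ne_zero fun k hk ↦ ha k (by rw [hk]; ring)
  have ha0 : a ≠ 0 := by simpa using ha 0
  have hpoch := ascPochhammer_eval_ne_zero (a := a + 1)
    (fun k h ↦ ha (k + 1) (by push_cast; linarith)) M
  have hx : (1 - x) ^ (M + 1) ≠ 0 := pow_ne_zero _ (by linarith)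
  rw [hF, hT, Real.Gamma_nat_eq_factorial, Real.Gamma_add_nat_eq_ascPochhammer_mul ha,
    ascPochhammer_eval_succ_left, Nat.factorial_succ]
  push_cast
  field_simp
  ring

/-- For positive integers `m < n`, integer `κ ≥ 2` and real `k_f ∉ ℤ`, with `k_g = κ - k_f`:
`₂F₁(1, k_g, κ; 1-m/n) = ((κ-1)/(k_f-1)) (1-m/n)^{1-κ} ₂F₁(1-k_f, 2-κ, 2-k_f; m/n)
  + (Γ(κ)Γ(1-k_f)/Γ(k_g)) (1-m/n)^{1-κ} (m/n)^{k_f-1}`. -/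
theorem hypergeometric_connection (m n : ℕ) (hm : 0 < m) (hmn : m < n)
    (κ : ℕ) (hκ : 2 ≤ κ) (kf : ℝ) (hkf : ∀ j : ℤ, kf ≠ j) :
    hyp2F1 1 ((κ : ℝ) - kf) (κ : ℝ) (1 - (m : ℝ) / n)
      = ((κ : ℝ) - 1) / (kf - 1) * (1 - (m : ℝ) / n) ^ (1 - (κ : ℝ)) *
            hyp2F1 (1 - kf) (2 - (κ : ℝ)) (2 - kf) ((m : ℝ) / n)
        + Real.Gamma (κ : ℝ) * Real.Gamma (1 - kf) / Real.Gamma ((κ : ℝ) - kf) *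
            (1 - (m : ℝ) / n) ^ (1 - (κ : ℝ)) * ((m : ℝ) / n) ^ (kf - 1) := by
  obtain ⟨M, rfl⟩ : ∃ M, κ = M + 2 := ⟨κ - 2, by omega⟩
  have hn : (0 : ℝ) < n := by exact_mod_cast hm.trans hmn
  have hx0 : 0 < (m : ℝ) / n := div_pos (by exact_mod_cast hm) hn
  have hx1 : (m : ℝ) / n < 1 := (div_lt_one hn).2 (by exact_mod_cast hmn)
  have ha : ∀ k : ℕ, (1 - kf) + k ≠ 0 := fun k h ↦ hkf (1 + k) (by push_cast; linarith)
  have hpow :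
      (1 - (m : ℝ) / n) ^ (1 - ((M + 2 : ℕ) : ℝ)) = ((1 - (m : ℝ) / n) ^ (M + 1))⁻¹ := by
    rw [← Real.rpow_natCast, ← Real.rpow_neg (by linarith)]
    push_cast
    ring_nf
  have hκM : ((M + 2 : ℕ) : ℝ) = (M + 1 : ℕ) + 1 := by push_cast; ring
  rw [hpow, show (2 : ℝ) - kf = (1 - kf) + 1 by ring,
    show 2 - ((M + 2 : ℕ) : ℝ) = -M by push_cast; ring, show kf - 1 = -(1 - kf) by ring, hκM,
    show ((M + 1 : ℕ) : ℝ) + 1 - kf = (1 - kf) + (M + 1 : ℕ) by ring,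
    hyp2F1_one_add_nat_one_sub ha hx0 hx1 M]
  push_cast
  ring
end

section
/- For integer κ ≥ 2, real k_f ∉ ℤ and positive integers m < n: n^{1-k_g} P_{κ,2-k_f}(n-m, m) = n^{k_f-1} P_{κ-2}^{(1-k_f, 1-κ)}(1 - 2m/n), where P_{a,b}(X,Y) = ∑_{j=0}^{a-2} C(j+b-2,j) X^j (X+Y)^{a-2-j}, k_g = κ - k_f, and P_r^{(α,β)} is the Jacobi polynomial. -/
/-- The Jacobi polynomial `P_r^{(a,b)}(z)`. -/
noncomputable def jacobiP (r : ℕ) (a b z : ℝ) : ℝ :=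
  Real.Gamma (a + r + 1) / ((r.factorial : ℝ) * Real.Gamma (a + b + r + 1)) *
    ∑ j ∈ Finset.range (r + 1),
      (r.choose j : ℝ) * (Real.Gamma (a + b + r + j + 1) / Real.Gamma (a + j + 1)) *
        ((z - 1) / 2) ^ j

open Finset

lemma lemA (N : ℕ) : ∀ x : ℝ, (∀ i : ℕ, i ≤ N → x + i ≠ 0) →
    ∑ i ∈ range (N+1), (N.choose i : ℝ) * (-1)^i / (x + i)
      = N.factorial / ∏ i ∈ range (N+1), (x + i) := by
  induction N with
  | zero => intro x hx; simp
  | succ N ih =>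
    intro x hx
    have hx' : ∀ i : ℕ, i ≤ N → x + i ≠ 0 := fun i hi => hx i (by omega)
    have hx1 : ∀ i : ℕ, i ≤ N → (x+1) + i ≠ 0 := by
      intro i hi h
      exact hx (i+1) (by omega) (by push_cast; linarith)
    have h0 : x ≠ 0 := by simpa using hx 0 (by omega)
    have hN1 : x + ((N:ℝ)+1) ≠ 0 := by
      have := hx (N+1) le_rfl; push_cast at this; exact this
    have h3 : (∑ i ∈ range (N+1), (N.choose (i+1):ℝ)*(-1)^(i+1)/(x+((i+1:ℕ):ℝ)))
        = ∑ i ∈ range (N+1), (N.choose i : ℝ)*(-1)^i/(x+i) - 1/x := by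
      have h := Finset.sum_range_succ' (fun i => (N.choose i : ℝ)*(-1)^i/(x+i)) (N+1)
      rw [Finset.sum_range_succ] at h
      simp only [Nat.choose_succ_self, Nat.cast_zero, zero_mul, zero_div, add_zero,
        Nat.choose_zero_right, Nat.cast_one, pow_zero, one_mul] at h
      push_cast at h ⊢
      linarith [h]
    have step : ∑ i ∈ range (N+2), ((N+1).choose i : ℝ) * (-1)^i / (x+i)
        = (∑ i ∈ range (N+1), (N.choose i : ℝ)*(-1)^i/(x+i))
          - ∑ i ∈ range (N+1), (N.choose i : ℝ)*(-1)^i/((x+1)+i) := by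
      rw [Finset.sum_range_succ' _ (N+1)]
      have h1 : ∀ i ∈ range (N+1), ((N+1).choose (i+1) : ℝ) * (-1)^(i+1) / (x + ((i+1:ℕ):ℝ))
          = -((N.choose i : ℝ)*(-1)^i/((x+1)+i))
            + (N.choose (i+1) : ℝ)*(-1)^(i+1)/(x+((i+1:ℕ):ℝ)) := by
        intro i _
        rw [Nat.choose_succ_succ]
        push_cast
        ring
      rw [Finset.sum_congr rfl h1, Finset.sum_add_distrib, h3]
      simp only [Finset.sum_neg_distrib, Nat.add_comm 1 N, Nat.choose_zero_right,
        Nat.cast_one, one_mul, Nat.cast_zero, add_zero, pow_zero]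
      ring
    have e2 : (∏ i ∈ range (N+1), ((x+1)+i)) * x
        = (∏ i ∈ range (N+1), (x+i)) * (x + ((N:ℝ)+1)) := by
      have h := Finset.prod_range_succ' (fun i => x + (i:ℝ)) (N+1)
      rw [Finset.prod_range_succ] at h
      have e0 : ∀ i ∈ range (N+1), x + ((i+1:ℕ):ℝ) = (x+1) + i := by
        intro i _; push_cast; ring
      rw [Finset.prod_congr rfl e0] at h
      push_cast at h ⊢
      linarith [h]
    have h₁ : (∏ i ∈ range (N+1), (x+(i:ℝ))) ≠ 0 :=
      Finset.prod_ne_zero_iff.2 (fun i hi => hx' i (Nat.lt_succ_iff.mp (mem_range.mp hi)))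
    have h₂ : (∏ i ∈ range (N+1), ((x+1)+(i:ℝ))) ≠ 0 :=
      Finset.prod_ne_zero_iff.2 (fun i hi => hx1 i (Nat.lt_succ_iff.mp (mem_range.mp hi)))
    have e3 : ∏ i ∈ range (N+1+1), (x + (i:ℝ))
        = (∏ i ∈ range (N+1), (x+(i:ℝ))) * (x + ((N:ℝ)+1)) := by
      rw [Finset.prod_range_succ]; push_cast; ring
    rw [step, ih x hx', ih (x+1) hx1, Nat.factorial_succ, e3]
    push_cast
    rw [div_sub_div _ _ h₁ h₂, div_eq_div_iff (mul_ne_zero h₁ h₂) (mul_ne_zero h₁ hN1)]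
    linear_combination ((N.factorial : ℝ) * (∏ i ∈ range (N+1), (x+(i:ℝ)))) * e2

lemma keyId (r : ℕ) (c : ℝ) (hc : ∀ i : ℕ, c + i ≠ 0) (s : ℝ) :
    ∑ j ∈ range (r+1), (∏ i ∈ range j, (c+i)) / j.factorial * (1-s)^j
      = (∏ i ∈ range (r+1), (c+i)) / r.factorial
          * ∑ j ∈ range (r+1), (r.choose j : ℝ) * (-s)^j / (c+j) := by
  have expand : ∀ j ∈ range (r+1), (r.choose j : ℝ) * (-s)^j / (c+j)
      = ∑ k ∈ range (r+1),
          (r.choose j : ℝ) * ((1-s)^k * (-1)^(j-k) * (j.choose k : ℝ)) / (c+j) := by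
    intro j hj
    have hj' : range (j+1) ⊆ range (r+1) := by
      apply Finset.range_subset_range.mpr
      have := mem_range.mp hj; omega
    have hbin : (-s : ℝ)^j = ∑ k ∈ range (j+1), (1-s)^k * (-1)^(j-k) * (j.choose k : ℝ) := by
      have h : (-s : ℝ) = (1-s) + (-1) := by ring
      rw [h, add_pow]
    rw [hbin, Finset.mul_sum, Finset.sum_div]
    apply Finset.sum_subset hj'
    intro k _ hk'
    have : j < k := by simpa using hk'
    simp [Nat.choose_eq_zero_of_lt this]
  rw [Finset.sum_congr rfl expand, Finset.sum_comm, Finset.mul_sum]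
  apply Finset.sum_congr rfl
  intro k hk
  have hkr : k ≤ r := Nat.lt_succ_iff.mp (mem_range.mp hk)
  -- inner sum over j
  have hsub : Finset.Ico k (r+1) ⊆ range (r+1) := by
    intro j hj; simp only [Finset.mem_Ico] at hj; exact mem_range.mpr hj.2
  have drop : ∑ j ∈ range (r+1),
        (r.choose j : ℝ) * ((1-s)^k * (-1)^(j-k) * (j.choose k : ℝ)) / (c+j)
      = ∑ j ∈ Finset.Ico k (r+1),
        (r.choose j : ℝ) * ((1-s)^k * (-1)^(j-k) * (j.choose k : ℝ)) / (c+j) := by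
    symm
    apply Finset.sum_subset hsub
    intro j hjm hj'
    have hjr := mem_range.mp hjm
    simp only [Finset.mem_Ico, not_and, not_le] at hj'
    have : j < k := by by_contra h; push_neg at h; have := hj' h; omega
    simp [Nat.choose_eq_zero_of_lt this]
  rw [drop, Finset.sum_Ico_eq_sum_range]
  have hc' : ∀ i : ℕ, i ≤ r - k → (c + k) + i ≠ 0 := by
    intro i _ h
    exact hc (k + i) (by push_cast; linarith)
  have la := lemA (r - k) (c + k) hc'
  have congr1 : ∀ i ∈ range (r + 1 - k),
      (r.choose (k+i) : ℝ) * ((1-s)^k * (-1)^((k+i)-k) * ((k+i).choose k : ℝ)) / (c+(k+i:ℕ))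
      = ((r.choose k : ℝ) * (1-s)^k) * (((r-k).choose i : ℝ) * (-1)^i / ((c+k)+i)) := by
    intro i hi
    have hik : k + i ≤ r := by have := mem_range.mp hi; omega
    have hcm : r.choose (k+i) * (k+i).choose k = r.choose k * (r-k).choose i := by
      rw [Nat.choose_mul (Nat.le_add_right k i), Nat.add_sub_cancel_left]
    have h1 : (k+i) - k = i := by omega
    have h2 : c + ((k+i : ℕ) : ℝ) = (c+k) + i := by push_cast; ring
    have hcm' : (r.choose (k+i) : ℝ) * ((k+i).choose k : ℝ) = (r.choose k : ℝ) * ((r-k).choose i : ℝ) := by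
      exact_mod_cast congrArg (Nat.cast : ℕ → ℝ) hcm
    rw [h1, h2]
    field_simp
    linear_combination ((c + (k:ℝ) + i)⁻¹ * (1-s)^k) * hcm' 
  rw [Finset.sum_congr rfl congr1, ← Finset.mul_sum]
  have hrk : r + 1 - k = (r - k) + 1 := by omega
  rw [hrk, la]
  -- now pure algebra: P_{r+1}/r! * (C(r,k)(1-s)^k * (r-k)!/∏) = P_k/k! (1-s)^k
  have hsplit : (∏ i ∈ range (r+1), (c+i))
      = (∏ i ∈ range k, (c+(i:ℝ))) * ∏ i ∈ range ((r-k)+1), ((c+k) + i) := by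
    have h := Finset.prod_range_add (fun i => c + (i:ℝ)) k ((r-k)+1)
    have hkk : k + ((r-k)+1) = r + 1 := by omega
    rw [hkk] at h
    rw [h]
    congr 1
    apply Finset.prod_congr rfl
    intro i _
    push_cast; ring
  have hfac : (r.choose k : ℝ) * k.factorial * (r-k).factorial = r.factorial := by
    exact_mod_cast congrArg (Nat.cast : ℕ → ℝ) (Nat.choose_mul_factorial_mul_factorial hkr)
  have hprodne : (∏ i ∈ range ((r-k)+1), ((c+k) + (i:ℝ))) ≠ 0 :=
    Finset.prod_ne_zero_iff.2 (fun i hi => hc' i (Nat.lt_succ_iff.mp (mem_range.mp hi)))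
  have hrf : (r.factorial : ℝ) ≠ 0 := Nat.cast_ne_zero.mpr r.factorial_ne_zero
  have hkf : (k.factorial : ℝ) ≠ 0 := Nat.cast_ne_zero.mpr k.factorial_ne_zero
  have hchne : (r.choose k : ℝ) ≠ 0 := Nat.cast_ne_zero.mpr (Nat.choose_pos hkr).ne'
  rw [hsplit, ← hfac]
  field_simp

lemma gamma_rise (c : ℝ) (hc : ∀ i : ℕ, c + i ≠ 0) (j : ℕ) :
    Real.Gamma (c + j) = (∏ i ∈ range j, (c + i)) * Real.Gamma c := by
  induction j with
  | zero => simp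
  | succ j ih =>
    have h : c + ((j+1 : ℕ) : ℝ) = (c + j) + 1 := by push_cast; ring
    rw [h, Real.Gamma_add_one (hc j), ih, Finset.prod_range_succ]
    ring

/-- For positive integers `m < n`, integer `κ ≥ 2` and real `k_f ∉ ℤ`, with `k_g = κ - k_f`:
`n^{1-k_g} P_{κ,2-k_f}(n-m, m) = n^{k_f-1} P_{κ-2}^{(1-k_f, 1-κ)}(1 - 2m/n)`. -/
theorem Ppoly_eq_jacobiP (m n κ : ℕ) (hm : 0 < m) (hmn : m < n) (hκ : 2 ≤ κ)
    (kf : ℝ) (hkf : ∀ j : ℤ, kf ≠ j) :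
    (n : ℝ) ^ (1 - ((κ : ℝ) - kf)) * Ppoly κ (2 - kf) ((n : ℝ) - (m : ℝ)) (m : ℝ)
      = (n : ℝ) ^ (kf - 1) * jacobiP (κ - 2) (1 - kf) (1 - (κ : ℝ)) (1 - 2 * (m : ℝ) / n) := by
  set r := κ - 2 with hrdef
  set c : ℝ := 1 - kf with hcdef
  have hκ1 : κ - 1 = r + 1 := by omega
  have hκr : (κ : ℝ) = (r : ℝ) + 2 := by
    have h : κ = r + 2 := by omega
    rw [h]; push_cast; ring
  have hc : ∀ i : ℕ, c + i ≠ 0 := by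
    intro i h
    exact hkf (1 + i) (by push_cast; rw [hcdef] at h; linarith)
  have hGc : Real.Gamma c ≠ 0 := by
    apply Real.Gamma_ne_zero
    intro m' h
    have := hc m'
    rw [h] at this
    simp at this
  have hn0 : (0:ℝ) < n := by
    have : 0 < n := lt_trans hm hmn
    exact_mod_cast this
  have hn0' : (n:ℝ) ≠ 0 := ne_of_gt hn0
  -- Ppoly rewrite
  have hPp : Ppoly κ (2 - kf) ((n:ℝ) - m) m
      = ∑ j ∈ range (r+1),
          ((∏ i ∈ range j, (c+i)) / j.factorial) * (((n:ℝ)-m)^j * (n:ℝ)^(r-j)) := by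
    rw [Ppoly, hκ1]
    apply Finset.sum_congr rfl
    intro j hj
    have h1 : ((n:ℝ) - m) + m = n := by ring
    rw [h1]
    have hgc : genChoose ((j:ℝ) + (2 - kf) - 2) j
        = (∏ i ∈ range j, (c+i)) / j.factorial := by
      rw [genChoose]
      have e1 : (j:ℝ) + (2-kf) - 2 + 1 = c + j := by rw [hcdef]; ring
      have e2 : (j:ℝ) + (2-kf) - 2 - j + 1 = c := by rw [hcdef]; ring
      rw [e1, e2, gamma_rise c hc j]
      have hjf : (j.factorial : ℝ) ≠ 0 := Nat.cast_ne_zero.mpr j.factorial_ne_zero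
      field_simp
    rw [hgc]
    ring
  -- jacobiP rewrite
  have hprodne : ∀ N : ℕ, (∏ i ∈ range N, (c + (i:ℝ))) ≠ 0 :=
    fun N => Finset.prod_ne_zero_iff.2 (fun i _ => hc i)
  have hJ : jacobiP r (1 - kf) (1 - (κ:ℝ)) (1 - 2*(m:ℝ)/n)
      = ((∏ i ∈ range (r+1), (c+i)) / r.factorial)
          * ∑ j ∈ range (r+1), (r.choose j : ℝ) * (-((m:ℝ)/n))^j / (c+j) := by
    rw [jacobiP]
    have e1 : (1 - kf) + (r:ℝ) + 1 = c + ((r+1:ℕ):ℝ) := by rw [hcdef]; push_cast; ring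
    have e2 : Real.Gamma ((1-kf) + r + 1) / ((r.factorial : ℝ) * Real.Gamma ((1-kf) + (1-(κ:ℝ)) + r + 1))
        = (∏ i ∈ range (r+1), (c+i)) / r.factorial := by
      have eab : (1 - kf) + (1-(κ:ℝ)) + (r:ℝ) + 1 = c := by rw [hcdef, hκr]; ring
      rw [e1, eab, gamma_rise c hc (r+1)]
      have hrf : (r.factorial : ℝ) ≠ 0 := Nat.cast_ne_zero.mpr r.factorial_ne_zero
      field_simp
    rw [e2]
    congr 1
    apply Finset.sum_congr rfl
    intro j hj
    have e3 : (1 - kf) + (1-(κ:ℝ)) + (r:ℝ) + (j:ℝ) + 1 = c + j := by rw [hcdef, hκr]; ring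
    have e4 : (1 - kf) + (j:ℝ) + 1 = c + ((j+1:ℕ):ℝ) := by rw [hcdef]; push_cast; ring
    have e5 : ((1 - 2*(m:ℝ)/n - 1)/2) = -((m:ℝ)/n) := by ring
    rw [e3, e4, e5, gamma_rise c hc j, gamma_rise c hc (j+1), Finset.prod_range_succ]
    have h1 : (∏ i ∈ range j, (c + (i:ℝ))) ≠ 0 := hprodne j
    have h2 : c + (j:ℝ) ≠ 0 := hc j
    field_simp
  -- per-term power manipulation
  have hterm : ∀ j ∈ range (r+1),
      (n:ℝ)^(1-((κ:ℝ)-kf)) * (((∏ i ∈ range j, (c+i)) / j.factorial) * (((n:ℝ)-m)^j * (n:ℝ)^(r-j)))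
        = (n:ℝ)^(kf-1) * (((∏ i ∈ range j, (c+i)) / j.factorial) * (1 - (m:ℝ)/n)^j) := by
    intro j hj
    have hjr : j ≤ r := Nat.lt_succ_iff.mp (mem_range.mp hj)
    have hexp : 1 - ((κ:ℝ) - kf) = (kf - 1) + (-(r:ℝ)) := by rw [hκr]; ring
    rw [hexp, Real.rpow_add hn0, Real.rpow_neg hn0.le, Real.rpow_natCast]
    have hpow : (n:ℝ)^(r-j) * (n:ℝ)^j = (n:ℝ)^r := by
      rw [← pow_add]
      congr 1
      omega
    have ht : (1 - (m:ℝ)/n)^j = ((n:ℝ)-m)^j / (n:ℝ)^j := by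
      rw [← div_pow]
      congr 1
      field_simp
    rw [ht]
    have hnr : ((n:ℝ)^r) ≠ 0 := pow_ne_zero _ hn0'
    have hnj : ((n:ℝ)^j) ≠ 0 := pow_ne_zero _ hn0'
    field_simp
    rw [← hpow]
    ring
  rw [hPp, hJ, Finset.mul_sum, Finset.sum_congr rfl hterm, ← Finset.mul_sum,
    keyId r c hc ((m:ℝ)/n)]
end
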